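/- Let β ∈ (0,1] and ν > 0, and define Ũ_{1,β,ν}(x) = (1/(β²Γ(ν))) ∫_0^∞ t^{ν/β−2} exp(−t^{1/β} − x/(βt)) dt for x > 0. Then for every real s with s > 0 and β(s−1)+ν > 0, the Mellin transform satisfies ∫_0^∞ x^{s−1} Ũ_{1,β,ν}(x) dx = β^{s−1} · Γ(s) · Γ(β(s−1)+ν) / Γ(ν). -/

import Mathlib

open MeasureTheory

/-- The weight function `Ũ_{1,β,ν}` for the Wright case `α = 1`. -/
noncomputable def wrightWeight (β ν : ℝ) (x : ℝ) : ℝ :=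
  (1 / (β ^ 2 * Real.Gamma ν)) *
    ∫ t in Set.Ioi (0 : ℝ), t ^ (ν / β - 2) * Real.exp (-(t ^ (1 / β)) - x / (β * t))

/-!
Writing `exp (-t ^ (1/β) - x/(βt)) = exp (-t ^ (1/β)) * exp (-x/(βt))` exhibits `Ũ` as a mixture of
exponentials `x ↦ exp (-x/c)`, whose Mellin transform at `s` is `c ^ s Γ(s)`. By Tonelli–Fubini the
Mellin transform of the mixture is `Γ(s)` times the `s`-th moment of the mixing density in `c = βt`,
and that moment is a stretched-exponential integral, again a value of `Γ` after substituting
`u = t ^ (1/β)`.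
-/

open Real Set

lemma integral_rpow_mul_exp_neg_div {s c : ℝ} (hs : 0 < s) (hc : 0 < c) :
    ∫ x in Ioi (0 : ℝ), x ^ (s - 1) * exp (-(x / c)) = c ^ s * Gamma s := by
  simp_rw [div_eq_inv_mul]
  rw [integral_rpow_mul_exp_neg_mul_Ioi hs (inv_pos.2 hc), one_div, inv_inv]

lemma integrableOn_rpow_mul_exp_neg_div {s c : ℝ} (hs : 0 < s) (hc : 0 < c) :
    IntegrableOn (fun x : ℝ ↦ x ^ (s - 1) * exp (-(x / c))) (Ioi 0) :=
  .of_integral_ne_zero (by rw [integral_rpow_mul_exp_neg_div hs hc]; positivity)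

theorem integral_rpow_mul_integral_mul_exp_neg_div {α : Type*} [MeasurableSpace α]
    {μ : Measure α} [SFinite μ] {g h : α → ℝ} (hg : Measurable g) (hh : Measurable h)
    (hh_pos : ∀ᵐ t ∂μ, 0 < h t) {s : ℝ} (hs : 0 < s)
    (hint : Integrable (fun t ↦ g t * h t ^ s) μ) :
    ∫ x in Ioi (0 : ℝ), x ^ (s - 1) * ∫ t, g t * exp (-(x / h t)) ∂μ =
      Gamma s * ∫ t, g t * h t ^ s ∂μ := by
  set F : ℝ → α → ℝ := fun x t ↦ x ^ (s - 1) * (g t * exp (-(x / h t)))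
  have hF_inner : ∀ᵐ t ∂μ, ∫ x in Ioi (0 : ℝ), F x t = Gamma s * (g t * h t ^ s) := by
    filter_upwards [hh_pos] with t ht
    simp_rw [F, mul_left_comm _ (g t), integral_const_mul, integral_rpow_mul_exp_neg_div hs ht]
    ring
  have hF_int : Integrable (Function.uncurry F) ((volume.restrict (Ioi 0)).prod μ) := by
    refine (integrable_prod_iff' (by unfold F Function.uncurry; fun_prop)).2 ⟨?_, ?_⟩
    · filter_upwards [hh_pos] with t ht
      simpa only [F, Function.uncurry_apply_pair, mul_left_comm _ (g t)] using
        (integrableOn_rpow_mul_exp_neg_div hs ht).const_mul (g t)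
    · refine (hint.norm.const_mul (Gamma s)).congr ?_
      filter_upwards [hh_pos] with t ht
      have hF_norm : ∀ x ∈ Ioi (0 : ℝ), ‖F x t‖ = x ^ (s - 1) * (‖g t‖ * exp (-(x / h t))) := by
        intro x hx
        simp only [F, norm_mul, norm_of_nonneg (rpow_nonneg (le_of_lt hx) _), norm_of_nonneg
          (exp_pos _).le]
      simp_rw [Function.uncurry_apply_pair, setIntegral_congr_fun measurableSet_Ioi hF_norm,
        mul_left_comm _ ‖g t‖, integral_const_mul, integral_rpow_mul_exp_neg_div hs ht, norm_mul,
        norm_of_nonneg (rpow_pos_of_pos ht s).le]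
      ring
  calc ∫ x in Ioi (0 : ℝ), x ^ (s - 1) * ∫ t, g t * exp (-(x / h t)) ∂μ
      = ∫ x in Ioi (0 : ℝ), ∫ t, F x t ∂μ := by simp_rw [F, integral_const_mul]
    _ = ∫ t, (∫ x in Ioi (0 : ℝ), F x t) ∂μ := integral_integral_swap hF_int
    _ = ∫ t, Gamma s * (g t * h t ^ s) ∂μ := integral_congr_ae hF_inner
    _ = Gamma s * ∫ t, g t * h t ^ s ∂μ := integral_const_mul _ _

lemma integral_rpow_mul_exp_neg_rpow_one_div {β q : ℝ} (hβ : 0 < β) (hq : -1 < q) :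
    ∫ t in Ioi (0 : ℝ), t ^ q * exp (-t ^ (1 / β)) = β * Gamma (β * (q + 1)) := by
  rw [integral_rpow_mul_exp_neg_rpow (one_div_pos.2 hβ) hq, one_div_one_div, div_div_eq_mul_div,
    div_one, mul_comm (q + 1)]

lemma wrightWeight_eq_integral_mul_exp_neg_div (β ν x : ℝ) :
    wrightWeight β ν x = 1 / (β ^ 2 * Gamma ν) *
      ∫ t in Ioi (0 : ℝ), t ^ (ν / β - 2) * exp (-t ^ (1 / β)) * exp (-(x / (β * t))) := by
  simp only [wrightWeight, exp_sub, exp_neg, div_eq_mul_inv, mul_assoc]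

theorem wrightWeight_mellin_general (β ν : ℝ) (hβ0 : 0 < β)
    (s : ℝ) (hs : 0 < s) (hs2 : 0 < β * (s - 1) + ν) :
    (∫ x in Set.Ioi (0 : ℝ), x ^ (s - 1) * wrightWeight β ν x) =
      β ^ (s - 1) * Real.Gamma s * Real.Gamma (β * (s - 1) + ν) / Real.Gamma ν := by
  have harg : β * (ν / β - 2 + s + 1) = β * (s - 1) + ν := by
    field_simp
    ring
  have hq : -1 < ν / β - 2 + s := by
    linarith [pos_of_mul_pos_right (harg ▸ hs2) hβ0.le]
  have hmoment : EqOn (fun t ↦ t ^ (ν / β - 2) * exp (-t ^ (1 / β)) * (β * t) ^ s)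
      (fun t ↦ β ^ s * (t ^ (ν / β - 2 + s) * exp (-t ^ (1 / β)))) (Ioi 0) := by
    intro t ht
    simp only [mul_rpow hβ0.le (le_of_lt ht), rpow_add ht]
    ring
  have hβt : ∀ᵐ t ∂(volume.restrict (Ioi (0 : ℝ))), 0 < β * t := by
    filter_upwards [ae_restrict_mem measurableSet_Ioi] with t ht
    exact mul_pos hβ0 ht
  have hint := IntegrableOn.congr_fun
    ((integrableOn_rpow_mul_exp_neg_rpow hq (one_div_pos.2 hβ0)).const_mul (β ^ s))
    hmoment.symm measurableSet_Ioi
  simp_rw [wrightWeight_eq_integral_mul_exp_neg_div, mul_left_comm _ (1 / (β ^ 2 * Gamma ν))]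
  rw [integral_const_mul,
    integral_rpow_mul_integral_mul_exp_neg_div (by fun_prop) (by fun_prop) hβt hs hint,
    setIntegral_congr_fun measurableSet_Ioi hmoment, integral_const_mul,
    integral_rpow_mul_exp_neg_rpow_one_div hβ0 hq, harg, rpow_sub_one hβ0.ne']
  field_simp

theorem wrightWeight_mellin (β ν : ℝ) (hβ0 : 0 < β) (hβ1 : β ≤ 1) (hν : 0 < ν)
    (s : ℝ) (hs : 0 < s) (hs2 : 0 < β * (s - 1) + ν) :
    (∫ x in Set.Ioi (0 : ℝ), x ^ (s - 1) * wrightWeight β ν x) =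
      β ^ (s - 1) * Real.Gamma s * Real.Gamma (β * (s - 1) + ν) / Real.Gamma ν :=
  wrightWeight_mellin_general β ν hβ0 s hs hs2
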